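/- arXiv:1312.1409 — 2 statements merged into one kernel-verified Lean document; each statement's English description precedes it below -/
import Mathlib

section
/- Define J(σ, t) = (1/2)·log(σ² + t²) − σ/(2(σ² + t²)) − (σ² − t²)/(12(σ² + t²)²). Then for each fixed t ≠ 0, the function σ ↦ J(σ, t) is monotonically increasing on [1/2, ∞). -/
noncomputable def J (σ t : ℝ) : ℝ :=
  (1/2) * Real.log (σ ^ 2 + t ^ 2) - σ / (2 * (σ ^ 2 + t ^ 2))
    - (σ ^ 2 - t ^ 2) / (12 * (σ ^ 2 + t ^ 2) ^ 2)

lemma J_hasDerivAt (t : ℝ) (ht : t ≠ 0) (σ : ℝ) :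
    HasDerivAt (fun σ => J σ t)
      ((1/2) * ((2*σ) / (σ ^ 2 + t ^ 2))
        - (1 * (2 * (σ ^ 2 + t ^ 2)) - σ * (2 * (2*σ))) / (2 * (σ ^ 2 + t ^ 2))^2
        - ((2*σ) * (12 * (σ ^ 2 + t ^ 2)^2) - (σ ^ 2 - t ^ 2) * (12 * (2 * (σ ^ 2 + t ^ 2) * (2*σ)))) / (12 * (σ ^ 2 + t ^ 2)^2)^2) σ := by
  have hu : (0:ℝ) < σ ^ 2 + t ^ 2 := by positivity
  have hU : HasDerivAt (fun σ : ℝ => σ ^ 2 + t ^ 2) (2*σ) σ := by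
    simpa using (hasDerivAt_pow 2 σ).add_const (t^2)
  have h1 : HasDerivAt (fun σ : ℝ => (1/2) * Real.log (σ ^ 2 + t ^ 2))
      ((1/2) * ((2*σ) / (σ ^ 2 + t ^ 2))) σ := (hU.log hu.ne').const_mul _
  have h2 : HasDerivAt (fun σ : ℝ => σ / (2 * (σ ^ 2 + t ^ 2)))
      ((1 * (2 * (σ ^ 2 + t ^ 2)) - σ * (2 * (2*σ))) / (2 * (σ ^ 2 + t ^ 2))^2) σ :=
    (hasDerivAt_id σ).div (hU.const_mul 2) (by positivity)
  have hU2 : HasDerivAt (fun σ : ℝ => 12 * (σ ^ 2 + t ^ 2)^2)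
      (12 * (2 * (σ ^ 2 + t ^ 2) * (2*σ))) σ := by
    have := (hU.pow 2).const_mul (12:ℝ)
    simpa [mul_comm, mul_assoc, mul_left_comm] using this
  have hN : HasDerivAt (fun σ : ℝ => σ ^ 2 - t ^ 2) (2*σ) σ := by
    simpa using (hasDerivAt_pow 2 σ).sub_const (t^2)
  have h3 : HasDerivAt (fun σ : ℝ => (σ ^ 2 - t ^ 2) / (12 * (σ ^ 2 + t ^ 2)^2))
      (((2*σ) * (12 * (σ ^ 2 + t ^ 2)^2) - (σ ^ 2 - t ^ 2) * (12 * (2 * (σ ^ 2 + t ^ 2) * (2*σ)))) / (12 * (σ ^ 2 + t ^ 2)^2)^2) σ :=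
    hN.div hU2 (by positivity)
  exact (h1.sub h2).sub h3

theorem J_mono (t : ℝ) (ht : t ≠ 0) :
    MonotoneOn (fun σ => J σ t) (Set.Ici (1/2 : ℝ)) := by
  have ht2 : (0:ℝ) < t ^ 2 := by positivity
  apply monotoneOn_of_deriv_nonneg (convex_Ici _)
  · exact fun σ _ => ((J_hasDerivAt t ht σ).continuousAt).continuousWithinAt
  · intro σ hσ
    exact (J_hasDerivAt t ht σ).differentiableAt.differentiableWithinAt
  · intro σ hσ
    rw [interior_Ici] at hσ
    have hσ' : (1/2 : ℝ) < σ := hσ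
    have hu : (0:ℝ) < σ ^ 2 + t ^ 2 := by positivity
    rw [(J_hasDerivAt t ht σ).deriv]
    have key : (1/2) * ((2*σ) / (σ ^ 2 + t ^ 2))
        - (1 * (2 * (σ ^ 2 + t ^ 2)) - σ * (2 * (2*σ))) / (2 * (σ ^ 2 + t ^ 2))^2
        - ((2*σ) * (12 * (σ ^ 2 + t ^ 2)^2) - (σ ^ 2 - t ^ 2) * (12 * (2 * (σ ^ 2 + t ^ 2) * (2*σ)))) / (12 * (σ ^ 2 + t ^ 2)^2)^2
        = (6*σ^5 + 3*σ^4 + σ^3 + 3*σ*t^2*(4*σ^2 - 1) + 3*t^4*(2*σ - 1)) / (6 * (σ ^ 2 + t ^ 2)^3) := by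
      field_simp
      ring
    rw [key]
    apply div_nonneg _ (by positivity)
    have h1 : (0:ℝ) ≤ 4*σ^2 - 1 := by nlinarith
    have h2 : (0:ℝ) ≤ 2*σ - 1 := by linarith
    have hσ0 : (0:ℝ) < σ := by linarith
    positivity
end

section
/- For t > 0, the function t ↦ (arctan(2t) − 2t/(4t² + 1)) / (2t³) is decreasing on (0, ∞). -/
open Real Set

private lemma h2s (t : ℝ) : HasDerivAt (fun s : ℝ => 2 * s) 2 t := by
  simpa using (hasDerivAt_id t).const_mul 2

private lemma hden (t : ℝ) : HasDerivAt (fun s : ℝ => 4 * s ^ 2 + 1) (8 * t) t := by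
  have := ((hasDerivAt_pow 2 t).const_mul 4).add_const 1
  refine this.congr_deriv ?_
  ring

private lemma hg (t : ℝ) :
    HasDerivAt (fun s : ℝ => 3 * Real.arctan (2 * s) - 6 * s / (4 * s ^ 2 + 1)
      - 16 * s ^ 3 / (4 * s ^ 2 + 1) ^ 2) (256 * t ^ 4 / (4 * t ^ 2 + 1) ^ 3) t := by
  have hdne : (4 * t ^ 2 + 1) ≠ 0 := by positivity
  have hdne2 : ((4 * t ^ 2 + 1) ^ 2) ≠ 0 := by positivity
  have h1 : HasDerivAt (fun s : ℝ => 3 * Real.arctan (2 * s))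
      (3 * (1 / (1 + (2 * t) ^ 2) * 2)) t := ((h2s t).arctan).const_mul 3
  have h6 : HasDerivAt (fun s : ℝ => 6 * s) 6 t := by
    simpa using (hasDerivAt_id t).const_mul 6
  have h2 := h6.div (hden t) hdne
  have hnum : HasDerivAt (fun s : ℝ => 16 * s ^ 3) (16 * (3 * t ^ 2)) t :=
    (hasDerivAt_pow 3 t).const_mul 16 |>.congr_deriv (by ring)
  have hd2 : HasDerivAt (fun s : ℝ => (4 * s ^ 2 + 1) ^ 2)
      (2 * (4 * t ^ 2 + 1) ^ 1 * (8 * t)) t := (hden t).pow 2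
  have h3 := hnum.div hd2 hdne2
  have := (h1.sub h2).sub h3
  refine this.congr_deriv ?_
  field_simp
  ring

private lemma g_pos {t : ℝ} (ht : 0 < t) :
    0 < 3 * Real.arctan (2 * t) - 6 * t / (4 * t ^ 2 + 1)
      - 16 * t ^ 3 / (4 * t ^ 2 + 1) ^ 2 := by
  set g : ℝ → ℝ := fun s => 3 * Real.arctan (2 * s) - 6 * s / (4 * s ^ 2 + 1)
      - 16 * s ^ 3 / (4 * s ^ 2 + 1) ^ 2 with hgdef
  have hmono : StrictMonoOn g (Ici 0) := by
    apply strictMonoOn_of_deriv_pos (convex_Ici 0)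
    · exact (Continuous.continuousOn (continuous_iff_continuousAt.2
        fun x => (hg x).differentiableAt.continuousAt))
    · intro x hx
      rw [interior_Ici] at hx
      rw [(hg x).deriv]
      have hx0 : (0:ℝ) < x := hx
      positivity
  have h0 : g 0 = 0 := by simp [hgdef]
  have := hmono (by simp : (0:ℝ) ∈ Ici 0) (le_of_lt ht) ht
  rw [h0] at this
  exact this

private lemma hf {t : ℝ} (ht : 0 < t) :
    HasDerivAt (fun s : ℝ => (Real.arctan (2 * s) - 2 * s / (4 * s ^ 2 + 1)) / (2 * s ^ 3))
      (-(3 * Real.arctan (2 * t) - 6 * t / (4 * t ^ 2 + 1)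
        - 16 * t ^ 3 / (4 * t ^ 2 + 1) ^ 2) / (2 * t ^ 4)) t := by
  have hdne : (4 * t ^ 2 + 1) ≠ 0 := by positivity
  have htne : (2 * t ^ 3 : ℝ) ≠ 0 := by positivity
  have hA : HasDerivAt (fun s : ℝ => Real.arctan (2 * s) - 2 * s / (4 * s ^ 2 + 1))
      ((1 / (1 + (2 * t) ^ 2) * 2) - (2 * (4 * t ^ 2 + 1) - 2 * t * (8 * t)) / (4 * t ^ 2 + 1) ^ 2)
      t := ((h2s t).arctan).sub ((h2s t).div (hden t) hdne)
  have hD : HasDerivAt (fun s : ℝ => 2 * s ^ 3) (6 * t ^ 2) t := by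
    have := (hasDerivAt_pow 3 t).const_mul 2
    refine this.congr_deriv ?_; ring
  have := hA.div hD htne
  refine this.congr_deriv ?_
  have ht4 : (t:ℝ) ≠ 0 := ht.ne'
  field_simp
  ring

theorem integral_value_decreasing :
    StrictAntiOn (fun t : ℝ =>
      (Real.arctan (2 * t) - 2 * t / (4 * t ^ 2 + 1)) / (2 * t ^ 3))
      (Set.Ioi (0:ℝ)) := by
  apply strictAntiOn_of_deriv_neg (convex_Ioi 0)
  · exact fun x hx => ((hf hx).differentiableAt.continuousAt).continuousWithinAt
  · intro x hx
    rw [interior_Ioi] at hx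
    rw [(hf hx).deriv]
    have hx0 : (0:ℝ) < x := hx
    have := g_pos hx
    have h4 : (0:ℝ) < 2 * x ^ 4 := by positivity
    exact div_neg_of_neg_of_pos (neg_neg_of_pos this) h4
end
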